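/- Let λ ∈ (0,1], let D ⊆ ℝⁿ be a C-set, and let X ⊆ ℝⁿ and U ⊆ ℝᵐ be C-sets. Then λ^k·Q_k^1(D) ⊆ Q_k^λ(D) for every k ∈ ℕ. -/

import Mathlib

open Set Metric Pointwise

noncomputable section

abbrev Euc (n : ℕ) := EuclideanSpace ℝ (Fin n)

def IsCSet {n : ℕ} (C : Set (Euc n)) : Prop :=
  Convex ℝ C ∧ IsCompact C ∧ (0 : Euc n) ∈ interior C

def rho {n : ℕ} (ξ : Euc n) (C : Set (Euc n)) : ℝ :=
  sSup {μ : ℝ | 0 < μ ∧ μ • ξ ∈ C}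

def cdist {n : ℕ} (C D : Set (Euc n)) : ℝ :=
  ⨆ ξ : sphere (0 : Euc n) 1, |Real.log (rho ξ C) - Real.log (rho ξ D)|

def Q1 {n m : ℕ} (A : Matrix (Fin n) (Fin n) ℝ) (B : Matrix (Fin n) (Fin m) ℝ)
    (X : Set (Euc n)) (U : Set (Euc m)) (lam : ℝ) (D : Set (Euc n)) : Set (Euc n) :=
  {x ∈ X | ∃ u ∈ U, WithLp.toLp 2 (A.mulVec x + B.mulVec u) ∈ lam • D}

def Qiter {n m : ℕ} (A : Matrix (Fin n) (Fin n) ℝ) (B : Matrix (Fin n) (Fin m) ℝ)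
    (X : Set (Euc n)) (U : Set (Euc m)) (lam : ℝ) (D : Set (Euc n)) : ℕ → Set (Euc n)
  | 0 => D
  | k + 1 => Q1 A B X U lam (Qiter A B X U lam D k)

def IsContractive {n m : ℕ} (A : Matrix (Fin n) (Fin n) ℝ) (B : Matrix (Fin n) (Fin m) ℝ)
    (X : Set (Euc n)) (U : Set (Euc m)) (lam : ℝ) (C : Set (Euc n)) : Prop :=
  C ⊆ X ∧ ∀ x ∈ C, ∃ u ∈ U, WithLp.toLp 2 (A.mulVec x + B.mulVec u) ∈ lam • C

def Cmax {n m : ℕ} (A : Matrix (Fin n) (Fin n) ℝ) (B : Matrix (Fin n) (Fin m) ℝ)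
    (X : Set (Euc n)) (U : Set (Euc m)) (lam : ℝ) : Set (Euc n) :=
  ⋃₀ {C | IsContractive A B X U lam C}

def ctrb {n m : ℕ} (A : Matrix (Fin n) (Fin n) ℝ) (B : Matrix (Fin n) (Fin m) ℝ) :
    Matrix (Fin n) (Fin n × Fin m) ℝ :=
  Matrix.of fun i p => (A ^ (n - 1 - (p.1 : ℕ)) * B) i p.2

def Controllable {n m : ℕ} (A : Matrix (Fin n) (Fin n) ℝ)
    (B : Matrix (Fin n) (Fin m) ℝ) : Prop :=
  (ctrb A B).rank = n

def enorm {ι : Type*} [Fintype ι] (v : ι → ℝ) : ℝ :=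
  ‖(WithLp.equiv 2 (ι → ℝ)).symm v‖

def sigmaMax {n : ℕ} {ι : Type*} [Fintype ι] (Φ : Matrix (Fin n) ι ℝ) : ℝ :=
  ⨆ ξ : sphere (0 : EuclideanSpace ℝ ι) 1, enorm (Φ.mulVec ξ)

def sigmaMin {n : ℕ} {ι : Type*} [Fintype ι] (Φ : Matrix (Fin n) ι ℝ) : ℝ :=
  ⨅ ξ : sphere (0 : Euc n) 1, enorm (Φ.transpose.mulVec ξ)

def alphaA {n : ℕ} (A : Matrix (Fin n) (Fin n) ℝ) : ℝ :=
  max 1 (⨆ j ∈ Finset.Icc 1 n, sigmaMax (A ^ j))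

def rhoHat {n m : ℕ} (A : Matrix (Fin n) (Fin n) ℝ) (B : Matrix (Fin n) (Fin m) ℝ)
    (lam rx ru : ℝ) : ℝ :=
  lam ^ (n - 1) / alphaA A *
    min (rx / (1 + sigmaMax (ctrb A B) / sigmaMin (ctrb A B)))
        (ru * sigmaMin (ctrb A B))

end

/-! Since `X` and `U` are convex and contain `0`, scaling an admissible pair `(x, u)` by
`t ∈ [0, 1]` keeps it admissible and, by linearity, scales its successor by `t`; hence
`t • Q₁^μ(D) ⊆ Q₁^μ(t • D)`. Together with `Q₁^λ(D) = Q₁^1(λ • D)`, induction on `k` gives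
`λ^(k+1) • Q₁^1(Q_k^1) ⊆ Q₁^1(λ • λ^k • Q_k^1) ⊆ Q₁^1(λ • Q_k^λ) = Q_{k+1}^λ(D)`. -/

section Q1

variable {n m : ℕ} (A : Matrix (Fin n) (Fin n) ℝ) (B : Matrix (Fin n) (Fin m) ℝ)
  (X : Set (Euc n)) (U : Set (Euc m))

theorem Q1_mono {lam : ℝ} {D D' : Set (Euc n)} (h : D ⊆ D') :
    Q1 A B X U lam D ⊆ Q1 A B X U lam D' :=
  fun _ ⟨hx, u, hu, hxu⟩ => ⟨hx, u, hu, smul_set_mono h hxu⟩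

theorem Q1_one_smul (lam : ℝ) (D : Set (Euc n)) :
    Q1 A B X U 1 (lam • D) = Q1 A B X U lam D := by
  simp only [Q1, one_smul]

variable {X U}

theorem smul_Q1_subset (hX : StarConvex ℝ 0 X) (hU : StarConvex ℝ 0 U) {t : ℝ}
    (ht : t ∈ Icc (0 : ℝ) 1) (lam : ℝ) (D : Set (Euc n)) :
    t • Q1 A B X U lam D ⊆ Q1 A B X U lam (t • D) := by
  rintro _ ⟨x, ⟨hx, u, hu, hxu⟩, rfl⟩
  refine ⟨hX.smul_mem hx ht.1 ht.2, t • u, hU.smul_mem hu ht.1 ht.2, ?_⟩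
  have hlin : WithLp.toLp 2 (A.mulVec (WithLp.ofLp (t • x)) + B.mulVec (WithLp.ofLp (t • u)))
      = t • WithLp.toLp 2 (A.mulVec x + B.mulVec u) := by
    rw [WithLp.ofLp_smul, WithLp.ofLp_smul, Matrix.mulVec_smul, Matrix.mulVec_smul, ← smul_add,
      WithLp.toLp_smul]
  rw [hlin, smul_comm lam t D]
  exact smul_mem_smul_set hxu

theorem smul_pow_Qiter_one_subset (hX : StarConvex ℝ 0 X) (hU : StarConvex ℝ 0 U) {lam : ℝ}
    (hlam : lam ∈ Icc (0 : ℝ) 1) (D : Set (Euc n)) :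
    ∀ k : ℕ, lam ^ k • Qiter A B X U 1 D k ⊆ Qiter A B X U lam D k
  | 0 => by simp only [pow_zero, one_smul, Qiter, subset_rfl]
  | k + 1 =>
    calc lam ^ (k + 1) • Q1 A B X U 1 (Qiter A B X U 1 D k)
        ⊆ Q1 A B X U 1 (lam • lam ^ k • Qiter A B X U 1 D k) := by
          rw [← mul_smul, ← pow_succ']
          exact smul_Q1_subset A B hX hU ⟨pow_nonneg hlam.1 _, pow_le_one₀ hlam.1 hlam.2⟩ 1 _
      _ ⊆ Q1 A B X U 1 (lam • Qiter A B X U lam D k) :=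
          Q1_mono A B X U (smul_set_mono (smul_pow_Qiter_one_subset hX hU hlam D k))
      _ = Q1 A B X U lam (Qiter A B X U lam D k) := Q1_one_smul A B X U lam _

end Q1

theorem IsCSet.starConvex_zero {n : ℕ} {C : Set (Euc n)} (hC : IsCSet C) : StarConvex ℝ 0 C :=
  hC.1.starConvex (interior_subset hC.2.2)

theorem stmt12_general {n m : ℕ} (lam : ℝ) (hlam : lam ∈ Set.Ioc (0 : ℝ) 1)
    (A : Matrix (Fin n) (Fin n) ℝ) (B : Matrix (Fin n) (Fin m) ℝ)
    (X : Set (Euc n)) (U : Set (Euc m)) (hX : IsCSet X) (hU : IsCSet U)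
    (D : Set (Euc n)) :
    ∀ k : ℕ, lam ^ k • Qiter A B X U 1 D k ⊆ Qiter A B X U lam D k :=
  smul_pow_Qiter_one_subset A B hX.starConvex_zero hU.starConvex_zero
    (Ioc_subset_Icc_self hlam) D

theorem stmt12 {n m : ℕ} (lam : ℝ) (hlam : lam ∈ Set.Ioc (0 : ℝ) 1)
    (A : Matrix (Fin n) (Fin n) ℝ) (B : Matrix (Fin n) (Fin m) ℝ)
    (X : Set (Euc n)) (U : Set (Euc m)) (hX : IsCSet X) (hU : IsCSet U)
    (D : Set (Euc n)) (hD : IsCSet D) :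
    ∀ k : ℕ, lam ^ k • Qiter A B X U 1 D k ⊆ Qiter A B X U lam D k :=
  stmt12_general lam hlam A B X U hX hU D
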